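/- Let R be a finite commutative ring with characteristic N, and let n ≥ 1 be an integer. Let S = {α_1, ..., α_{|S|}} be a finite nonempty set of n-tuples of nonnegative integers, none equal to (0, ..., 0), and write α_k = (α^{(k)}_1, ..., α^{(k)}_n). Let χ_1, ..., χ_{|S|} be nontrivial additive characters of R, and let d be a positive integer such that d < lpf(N) and d ≥ max_{1 ≤ k ≤ |S|} ∑_{i=1}^{n} α^{(k)}_i. Then | (1/|R|^n) · ∑_{y ∈ R^n} ∏_{k=1}^{|S|} χ_k(y^{α_k}) | ≤ ((d−1)/lpf(N))^{2^{−d}}, where y^{α_k} denotes ∏_{i=1}^{n} y_i^{α^{(k)}_i} computed in R. -/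

import Mathlib

open scoped BigOperators Classical

/-- `χ : R → ℂ` is an additive character: a homomorphism from `(R, +)` to the unit circle. -/
def IsAddCharFn {R : Type*} [AddGroup R] (χ : R → ℂ) : Prop :=
  (∀ x y, χ (x + y) = χ x * χ y) ∧ ∀ x, ‖χ x‖ = 1

/-!
Weyl differencing. Write `Ψ y = ∏_β ψ_β (y ^ β)`. If every exponent is linear, `Ψ` is a
nontrivial additive character of `Rⁿ` and its sum vanishes. Otherwise pick `β₁` of maximal
degree, a coordinate `j` with `β₁ j ≠ 0`, and `γ = β₁ - e_j`. By van der Corput,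
`|∑ Ψ|² ≤ ∑_h |∑_y Ψ (y + h) conj (Ψ y)|`, and for each shift `h` the phase
`Ψ (y + h) conj (Ψ y)` is again of the same shape, with exponents of smaller degree and with
characters `θ_γ(h)` built from the binomial expansion. When `θ_γ(h)` is nontrivial the
induction hypothesis for `d - 1` applies. The remaining shifts form a submodule of `Rⁿ` that
misses `e_j`, because every positive integer below `lpf(N)` is a unit of `R`; so at most a
fraction `1 / lpf(N)` of the shifts are bad. Concavity of `t ↦ t ^ 2^(-d)` closes the
induction.
-/

open Finset ComplexConjugate

def IsAddCharFn.toAddChar {R : Type*} [AddGroup R] {χ : R → ℂ} (hχ : IsAddCharFn χ) :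
    AddChar R ℂ where
  toFun := χ
  map_zero_eq_one' := by
    have hne : χ 0 ≠ 0 := fun h => by simpa [h] using hχ.2 0
    exact mul_left_cancel₀ hne (by rw [mul_one, ← hχ.1, add_zero])
  map_add_eq_mul' := hχ.1

@[simp] lemma IsAddCharFn.coe_toAddChar {R : Type*} [AddGroup R] {χ : R → ℂ}
    (hχ : IsAddCharFn χ) : ⇑hχ.toAddChar = χ := rfl

section Monomials

variable {R : Type*} [CommRing R] {ι : Type*} [Fintype ι]

def evalMonomial (β : ι → ℕ) (y : ι → R) : R := ∏ i, y i ^ β i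

/-- The coefficient of `evalMonomial γ y` in the expansion of `evalMonomial β (y + h)`. -/
def shiftCoeff (β γ : ι → ℕ) (h : ι → R) : R :=
  (∏ i, (β i).choose (γ i) : ℕ) * evalMonomial (β - γ) h

@[simp] lemma evalMonomial_zero (y : ι → R) : evalMonomial 0 y = 1 := by
  simp [evalMonomial]

lemma shiftCoeff_self (β : ι → ℕ) (h : ι → R) : shiftCoeff β β h = 1 := by
  simp [shiftCoeff]

lemma shiftCoeff_of_not_le {β γ : ι → ℕ} (hγβ : ¬γ ≤ β) (h : ι → R) : shiftCoeff β γ h = 0 := by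
  obtain ⟨i, hi⟩ : ∃ i, β i < γ i := by simpa [Pi.le_def] using hγβ
  rw [shiftCoeff, prod_eq_zero (mem_univ i) (Nat.choose_eq_zero_of_lt hi), Nat.cast_zero, zero_mul]

lemma evalMonomial_add_eq_sum [DecidableEq ι] (β : ι → ℕ) (y h : ι → R) {s : Finset (ι → ℕ)}
    (hs : Iic β ⊆ s) :
    evalMonomial β (y + h) = ∑ γ ∈ s, shiftCoeff β γ h * evalMonomial γ y := by
  have hIic : Iic β = Fintype.piFinset fun i => range (β i + 1) := by
    simp_rw [Nat.range_succ_eq_Iic]; rfl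
  rw [← sum_subset hs fun γ _ hγ => by rw [shiftCoeff_of_not_le (by simpa using hγ), zero_mul]]
  simp_rw [evalMonomial, Pi.add_apply, add_pow, prod_univ_sum, ← hIic]
  refine sum_congr rfl fun γ _ => ?_
  simp only [shiftCoeff, evalMonomial, Pi.sub_apply, Nat.cast_prod, prod_mul_distrib]
  ring

lemma evalMonomial_single_one [DecidableEq ι] (k : ι) (y : ι → R) :
    evalMonomial (Pi.single k 1) y = y k := by
  rw [evalMonomial, prod_eq_single k (fun i _ hi => by simp [hi]) (by simp)]
  simp

lemma shiftCoeff_add_single [DecidableEq ι] (γ : ι → ℕ) (k : ι) (h : ι → R) :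
    shiftCoeff (γ + Pi.single k 1) γ h = (γ k + 1 : ℕ) * h k := by
  have hsub : γ + Pi.single k 1 - γ = Pi.single k 1 := by ext i; simp
  rw [shiftCoeff, hsub, evalMonomial_single_one,
    prod_eq_single k (fun i _ hi => by simp [hi]) (by simp)]
  simp

lemma exists_eq_single_of_sum_eq_one [DecidableEq ι] {δ : ι → ℕ} (hδ : ∑ i, δ i = 1) :
    ∃ k, δ = Pi.single k 1 := by
  obtain ⟨k, hk⟩ : ∃ k, δ k ≠ 0 := by
    by_contra! h
    simp [h] at hδ
  have hsplit := add_sum_erase univ δ (mem_univ k)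
  have hrest := sum_eq_zero_iff.1 (show ∑ i ∈ univ.erase k, δ i = 0 by omega)
  refine ⟨k, funext fun i => ?_⟩
  by_cases hi : i = k
  · subst hi; rw [Pi.single_eq_same]; omega
  · simp [hi, hrest i (mem_erase.2 ⟨hi, mem_univ i⟩)]

lemma sum_add_single_one [DecidableEq ι] (γ : ι → ℕ) (j : ι) :
    ∑ i, (γ + Pi.single j 1 : ι → ℕ) i = ∑ i, γ i + 1 := by
  simp [sum_add_distrib]

lemma exists_eq_add_single [DecidableEq ι] {β γ : ι → ℕ} (hlt : γ < β)
    (hdeg : ∑ i, β i ≤ ∑ i, γ i + 1) : ∃ k, β = γ + Pi.single k 1 := by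
  obtain ⟨j, hj⟩ := (Pi.lt_def.1 hlt).2
  have hsum := sum_lt_sum (fun i _ => hlt.le i) ⟨j, mem_univ j, hj⟩
  have hδ : ∑ i, (β - γ) i = 1 := by
    have := sum_tsub_distrib (s := univ) (fun i _ => hlt.le i)
    simp only [Pi.sub_apply]; omega
  obtain ⟨k, hk⟩ := exists_eq_single_of_sum_eq_one hδ
  exact ⟨k, by rw [← hk]; ext i; simp [Nat.add_sub_cancel' (hlt.le i)]⟩

lemma exists_shiftCoeff_eq_mul_apply [DecidableEq ι] {β γ : ι → ℕ} (hne : β ≠ γ)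
    (hdeg : ∑ i, β i ≤ ∑ i, γ i + 1) : ∃ (a : R) (k : ι), ∀ h, shiftCoeff β γ h = a * h k := by
  by_cases hγβ : γ ≤ β
  · obtain ⟨k, rfl⟩ := exists_eq_add_single (lt_of_le_of_ne hγβ hne.symm) hdeg
    exact ⟨_, k, shiftCoeff_add_single γ k⟩
  · obtain ⟨k, -⟩ : ∃ k, β k < γ k := by simpa [Pi.le_def] using hγβ
    exact ⟨0, k, fun h => by rw [shiftCoeff_of_not_le hγβ, zero_mul]⟩

lemma exists_add_single_mem [DecidableEq ι] {B : Finset (ι → ℕ)} (hB : ∃ β ∈ B, 1 < ∑ i, β i) :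
    ∃ (γ : ι → ℕ) (j : ι), γ + Pi.single j 1 ∈ B ∧ γ ≠ 0 ∧ ∀ β ∈ B, ∑ i, β i ≤ ∑ i, γ i + 1 := by
  obtain ⟨β, hβ, hβ1⟩ := hB
  obtain ⟨β₁, hβ₁B, hβ₁max⟩ := exists_max_image B (fun β => ∑ i, β i) ⟨β, hβ⟩
  obtain ⟨j, hj⟩ : ∃ j, β₁ j ≠ 0 := by
    by_contra! h
    simp only [h, sum_const_zero] at hβ₁max
    exact absurd (hβ₁max β hβ) (by omega)
  set γ := β₁ - Pi.single j 1
  have hβ₁γ : β₁ = γ + Pi.single j 1 := by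
    ext i
    by_cases hij : i = j
    · subst hij; simp only [γ, Pi.add_apply, Pi.sub_apply, Pi.single_eq_same]; omega
    · simp [γ, hij]
  have hsum : ∑ i, β₁ i = ∑ i, γ i + 1 := by rw [hβ₁γ, sum_add_single_one]
  refine ⟨γ, j, hβ₁γ ▸ hβ₁B, fun h0 => ?_, fun β hβ => hsum ▸ hβ₁max β hβ⟩
  simp only [h0, Pi.zero_apply, sum_const_zero, zero_add] at hsum
  have := hβ₁max β hβ
  omega

end Monomials

lemma isUnit_natCast_of_lt_minFac {R : Type*} [Ring R] {m : ℕ} (hm0 : m ≠ 0)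
    (hm : m < (ringChar R).minFac) : IsUnit (m : R) := by
  have hunit : IsUnit (m : ZMod (ringChar R)) :=
    (ZMod.isUnit_iff_coprime m _).2 (Nat.coprime_of_lt_minFac hm0 hm).symm
  simpa using hunit.map (ZMod.castHom (dvd_refl _) R)

/-- The multiples `m • v`, `m < (ringChar R).minFac`, lie in distinct cosets of `N`. -/
lemma Submodule.minFac_ringChar_mul_card_le {R M : Type*} [Ring R] [AddCommGroup M] [Module R M]
    [Finite M] (N : Submodule R M) {v : M} (hv : v ∉ N) :
    (ringChar R).minFac * Nat.card N ≤ Nat.card M := by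
  have : Finite (M ⧸ N) := Finite.of_surjective _ N.mkQ_surjective
  let f : Fin (ringChar R).minFac → M ⧸ N := fun m => Submodule.Quotient.mk ((m : ℕ) • v)
  have hf : Function.Injective f := by
    intro m m' hmm'
    wlog hle : m ≤ m' generalizing m m'
    · exact (this hmm'.symm (le_of_not_ge hle)).symm
    have hmem : (((m' : ℕ) - m : ℕ) : R) • v ∈ N := by
      rw [Nat.cast_smul_eq_nsmul, sub_nsmul _ hle, ← sub_eq_add_neg]
      exact (Submodule.Quotient.eq N).1 hmm'.symm
    refine Fin.ext (by_contra fun hne => ?_)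
    obtain ⟨u, hu⟩ := isUnit_natCast_of_lt_minFac (R := R) (m := (m' : ℕ) - m) (by omega) (by omega)
    exact hv (by simpa [← hu] using N.smul_mem (↑u⁻¹ : R) hmem)
  calc (ringChar R).minFac * Nat.card N ≤ Nat.card (M ⧸ N) * Nat.card N := by
        gcongr; simpa using Nat.card_le_card_of_injective f hf
    _ = Nat.card M := by
        rw [mul_comm]; exact N.toAddSubgroup.card_mul_index

lemma AddChar.map_sum_eq_prod {A M ι : Type*} [AddCommMonoid A] [CommMonoid M] (ψ : AddChar A M)
    (s : Finset ι) (f : ι → A) : ψ (∑ i ∈ s, f i) = ∏ i ∈ s, ψ (f i) := by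
  simpa [← ofAdd_sum] using map_prod ψ.toMonoidHom (fun i => Multiplicative.ofAdd (f i)) s

section CharacterSums

variable {R : Type*} [CommRing R] {ι : Type*} [Fintype ι]

def polyPhase (B : Finset (ι → ℕ)) (ψ : (ι → ℕ) → AddChar R ℂ) (y : ι → R) : ℂ :=
  ∏ β ∈ B, ψ β (evalMonomial β y)

/-- The character carried by the monomial `evalMonomial γ y` in
`polyPhase B ψ (y + h) * conj (polyPhase B ψ y)`, see `polyPhase_add_mul_conj`. -/
def derivChar [DecidableEq ι] (B : Finset (ι → ℕ)) (ψ : (ι → ℕ) → AddChar R ℂ) (γ : ι → ℕ)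
    (h : ι → R) : AddChar R ℂ :=
  ∏ β ∈ B.erase γ, (ψ β).mulShift (shiftCoeff β γ h)

lemma exists_sum_lt_of_derivChar_ne_one [DecidableEq ι] {B : Finset (ι → ℕ)}
    {ψ : (ι → ℕ) → AddChar R ℂ} {γ : ι → ℕ} {h : ι → R} (hθ : derivChar B ψ γ h ≠ 1) :
    ∃ β ∈ B, ∑ i, γ i < ∑ i, β i := by
  contrapose! hθ
  refine prod_eq_one fun β hβ => ?_
  have hγβ : ¬γ ≤ β := fun hle => by
    obtain ⟨i, hi⟩ := (Pi.lt_def.1 (lt_of_le_of_ne hle (ne_of_mem_erase hβ).symm)).2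
    exact (hθ β (mem_of_mem_erase hβ)).not_gt (sum_lt_sum (fun i _ => hle i) ⟨i, mem_univ i, hi⟩)
  rw [shiftCoeff_of_not_le hγβ, AddChar.mulShift_zero]

variable [Fintype R]

lemma norm_polyPhase (B : Finset (ι → ℕ)) (ψ : (ι → ℕ) → AddChar R ℂ) (y : ι → R) :
    ‖polyPhase B ψ y‖ = 1 := by
  simp [polyPhase]

variable [DecidableEq ι]

lemma norm_sum_polyPhase_le_card (B : Finset (ι → ℕ)) (ψ : (ι → ℕ) → AddChar R ℂ) :
    ‖∑ y, polyPhase B ψ y‖ ≤ Fintype.card R ^ Fintype.card ι := by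
  simpa [norm_polyPhase] using norm_sum_le univ (polyPhase B ψ)

/-- The characters `θ γ` that are trivial or attached to the constant monomial contribute a
constant of modulus one. -/
lemma norm_sum_polyPhase_filter (s : Finset (ι → ℕ)) (θ : (ι → ℕ) → AddChar R ℂ) :
    ‖∑ y, polyPhase s θ y‖ = ‖∑ y, polyPhase (s.filter fun γ => γ ≠ 0 ∧ θ γ ≠ 1) θ y‖ := by
  set c := ∏ γ ∈ s.filter (fun γ => ¬(γ ≠ 0 ∧ θ γ ≠ 1)), θ γ 1
  have hsplit : ∀ y, polyPhase s θ y
      = polyPhase (s.filter fun γ => γ ≠ 0 ∧ θ γ ≠ 1) θ y * c := by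
    intro y
    rw [polyPhase, polyPhase, ← prod_filter_mul_prod_filter_not s (fun γ => γ ≠ 0 ∧ θ γ ≠ 1)]
    congr 1
    refine prod_congr rfl fun γ hγ => ?_
    rcases not_and_or.1 (mem_filter.1 hγ).2 with hγ0 | hθ
    · rw [not_not.1 hγ0, evalMonomial_zero]
    · rw [not_not.1 hθ, AddChar.one_apply, AddChar.one_apply]
  have hc : ‖c‖ = 1 := by simp [c]
  rw [sum_congr rfl fun y _ => hsplit y, ← sum_mul, norm_mul, hc, mul_one]

lemma polyPhase_add_mul_conj {B s : Finset (ι → ℕ)} (hs : ∀ β ∈ B, Iic β ⊆ s)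
    (ψ : (ι → ℕ) → AddChar R ℂ) (y h : ι → R) :
    polyPhase B ψ (y + h) * conj (polyPhase B ψ y) = polyPhase s (derivChar B ψ · h) y := by
  have hdiff : ∀ β ∈ B, evalMonomial β (y + h) - evalMonomial β y
      = ∑ γ ∈ s.erase β, shiftCoeff β γ h * evalMonomial γ y := by
    intro β hβ
    rw [evalMonomial_add_eq_sum β y h (hs β hβ), ← sum_erase_add _ _ ((hs β hβ) (mem_Iic.2 le_rfl)),
      shiftCoeff_self, one_mul, add_sub_cancel_right]
  calc polyPhase B ψ (y + h) * conj (polyPhase B ψ y)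
      = ∏ β ∈ B, ∏ γ ∈ s.erase β, ψ β (shiftCoeff β γ h * evalMonomial γ y) := by
        rw [polyPhase, polyPhase, map_prod, ← prod_mul_distrib]
        refine prod_congr rfl fun β hβ => ?_
        rw [← AddChar.map_neg_eq_conj, ← AddChar.map_add_eq_mul, ← sub_eq_add_neg, hdiff β hβ,
          AddChar.map_sum_eq_prod]
    _ = ∏ γ ∈ s, ∏ β ∈ B.erase γ, ψ β (shiftCoeff β γ h * evalMonomial γ y) := by
        refine prod_comm' fun β γ => ⟨fun ⟨hβ, hγ⟩ => ?_, fun ⟨hβ, hγ⟩ => ?_⟩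
        · exact ⟨mem_erase.2 ⟨(ne_of_mem_erase hγ).symm, hβ⟩, mem_of_mem_erase hγ⟩
        · exact ⟨mem_of_mem_erase hβ, mem_erase.2 ⟨(ne_of_mem_erase hβ).symm, hγ⟩⟩
    _ = polyPhase s (derivChar B ψ · h) y := by
        simp [polyPhase, derivChar, AddChar.prod_apply]

end CharacterSums

section BadShifts

variable {R : Type*} [CommRing R] {ι : Type*} [Fintype ι] [DecidableEq ι]
  {B : Finset (ι → ℕ)} {ψ : (ι → ℕ) → AddChar R ℂ} {γ : ι → ℕ}

lemma derivChar_add (hdeg : ∀ β ∈ B, ∑ i, β i ≤ ∑ i, γ i + 1) (h h' : ι → R) :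
    derivChar B ψ γ (h + h') = derivChar B ψ γ h * derivChar B ψ γ h' := by
  rw [derivChar, derivChar, derivChar, ← prod_mul_distrib]
  refine prod_congr rfl fun β hβ => ?_
  obtain ⟨a, k, hak⟩ := exists_shiftCoeff_eq_mul_apply (R := R) (ne_of_mem_erase hβ)
    (hdeg β (mem_of_mem_erase hβ))
  rw [hak, hak, hak, AddChar.mulShift_mul, Pi.add_apply, mul_add]

lemma derivChar_smul (hdeg : ∀ β ∈ B, ∑ i, β i ≤ ∑ i, γ i + 1) (r : R) (h : ι → R) :
    derivChar B ψ γ (r • h) = (derivChar B ψ γ h).mulShift r := by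
  ext x
  simp only [derivChar, AddChar.mulShift_apply, AddChar.prod_apply]
  refine prod_congr rfl fun β hβ => ?_
  obtain ⟨a, k, hak⟩ := exists_shiftCoeff_eq_mul_apply (R := R) (ne_of_mem_erase hβ)
    (hdeg β (mem_of_mem_erase hβ))
  rw [hak, hak, Pi.smul_apply, smul_eq_mul]
  ring_nf

lemma derivChar_single_one {j : ι} (hγj : γ + Pi.single j 1 ∈ B)
    (hdeg : ∀ β ∈ B, ∑ i, β i ≤ ∑ i, γ i + 1) :
    derivChar B ψ γ (Pi.single j 1) = (ψ (γ + Pi.single j 1)).mulShift (γ j + 1 : ℕ) := by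
  have hne : γ + Pi.single j 1 ≠ γ := fun h => by simpa using congrFun h j
  rw [derivChar, prod_eq_single_of_mem _ (mem_erase.2 ⟨hne, hγj⟩) fun β hβ hβj => ?_,
    shiftCoeff_add_single, Pi.single_eq_same, mul_one]
  by_cases hγβ : γ ≤ β
  · obtain ⟨k, rfl⟩ := exists_eq_add_single (lt_of_le_of_ne hγβ (ne_of_mem_erase hβ).symm)
      (hdeg _ (mem_of_mem_erase hβ))
    have hkj : k ≠ j := fun hkj => hβj (by rw [hkj])
    rw [shiftCoeff_add_single, Pi.single_eq_of_ne hkj, mul_zero, AddChar.mulShift_zero]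
  · rw [shiftCoeff_of_not_le hγβ, AddChar.mulShift_zero]

/-- Under `hdeg`, `h ↦ derivChar B ψ γ h` is `R`-linear in `h`, so the shifts on which it is
trivial form a submodule, and `Pi.single j 1` lies outside it. -/
lemma minFac_ringChar_mul_card_derivChar_eq_one_le [Fintype R] {j : ι}
    (hγj : γ + Pi.single j 1 ∈ B) (hψ : ψ (γ + Pi.single j 1) ≠ 1)
    (hdeg : ∀ β ∈ B, ∑ i, β i ≤ ∑ i, γ i + 1) (hp : γ j + 1 < (ringChar R).minFac) :
    (ringChar R).minFac * #{h | derivChar B ψ γ h = 1} ≤ Fintype.card R ^ Fintype.card ι := by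
  let H : Submodule R (ι → R) :=
    { carrier := {h | derivChar B ψ γ h = 1}
      add_mem' := fun {h h'} hh hh' => by
        simp_all only [Set.mem_ofPred_eq, derivChar_add hdeg, mul_one]
      zero_mem' := by
        simpa [AddChar.mulShift_zero] using derivChar_smul (ψ := ψ) hdeg 0 0
      smul_mem' := fun r h hh => by
        simp_all only [Set.mem_ofPred_eq, derivChar_smul hdeg]
        ext; simp }
  have hv : Pi.single j 1 ∉ H := by
    change derivChar B ψ γ (Pi.single j 1) ≠ 1
    rwa [derivChar_single_one hγj hdeg, Ne,
      AddChar.mulShift_unit_eq_one_iff _ (isUnit_natCast_of_lt_minFac (by omega) hp)]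
  have hH : Nat.card H = #{h | derivChar B ψ γ h = 1} := by
    rw [← Nat.card_eq_finsetCard]
    exact Nat.card_congr (Equiv.subtypeEquivRight fun h => by simp [H])
  have := H.minFac_ringChar_mul_card_le hv
  rwa [hH, Nat.card_eq_fintype_card, Fintype.card_fun] at this

end BadShifts

section Linear
variable {R : Type*} [CommRing R] [Fintype R] {ι : Type*} [Fintype ι] [DecidableEq ι]

lemma sum_polyPhase_eq_zero_of_sum_le_one {B : Finset (ι → ℕ)} {ψ : (ι → ℕ) → AddChar R ℂ}
    (hB : B.Nonempty) (hB0 : ∀ β ∈ B, β ≠ 0) (hψ : ∀ β ∈ B, ψ β ≠ 1)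
    (hdeg : ∀ β ∈ B, ∑ i, β i ≤ 1) : ∑ y, polyPhase B ψ y = 0 := by
  have hsingle : ∀ β ∈ B, ∃ k, β = Pi.single k 1 := fun β hβ =>
    exists_eq_single_of_sum_eq_one (le_antisymm (hdeg β hβ) (Nat.one_le_iff_ne_zero.2
      fun h => hB0 β hβ (funext fun i => sum_eq_zero_iff.1 h i (mem_univ i))))
  -- with only linear monomials, `polyPhase B ψ` is an additive character of `ι → R`
  let Ψ : AddChar (ι → R) ℂ :=
    { toFun := polyPhase B ψ
      map_zero_eq_one' := prod_eq_one fun β hβ => by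
        obtain ⟨k, rfl⟩ := hsingle β hβ
        rw [evalMonomial_single_one, Pi.zero_apply, AddChar.map_zero_eq_one]
      map_add_eq_mul' := fun y h => by
        rw [polyPhase, polyPhase, polyPhase, ← prod_mul_distrib]
        refine prod_congr rfl fun β hβ => ?_
        obtain ⟨k, rfl⟩ := hsingle β hβ
        simp only [evalMonomial_single_one, Pi.add_apply, AddChar.map_add_eq_mul] }
  obtain ⟨β₀, hβ₀⟩ := hB
  obtain ⟨k, rfl⟩ := hsingle β₀ hβ₀
  obtain ⟨c, hc⟩ := AddChar.ne_one_iff.1 (hψ _ hβ₀)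
  refine AddChar.sum_eq_zero_of_ne_one (ψ := Ψ) (AddChar.ne_one_iff.2 ⟨Pi.single k c, ?_⟩)
  change polyPhase B ψ (Pi.single k c) ≠ 1
  rwa [polyPhase, prod_eq_single_of_mem _ hβ₀ fun β hβ hβk => ?_, evalMonomial_single_one,
    Pi.single_eq_same]
  obtain ⟨l, rfl⟩ := hsingle β hβ
  have hlk : l ≠ k := fun h => hβk (by rw [h])
  rw [evalMonomial_single_one, Pi.single_eq_of_ne hlk, AddChar.map_zero_eq_one]

end Linear

lemma sq_norm_sum_le_sum_norm_sum_add_mul_conj {G : Type*} [AddCommGroup G] [Fintype G]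
    (f : G → ℂ) : ‖∑ x, f x‖ ^ 2 ≤ ∑ h, ‖∑ x, f (x + h) * conj (f x)‖ := by
  have hexpand : (∑ x, f x) * conj (∑ x, f x) = ∑ h, ∑ x, f (x + h) * conj (f x) := by
    calc (∑ x, f x) * conj (∑ x, f x) = ∑ x, ∑ y, f y * conj (f x) := by
          rw [map_sum, sum_mul_sum, sum_comm]
      _ = ∑ x, ∑ h, f (x + h) * conj (f x) := sum_congr rfl fun x _ =>
          (Fintype.sum_equiv (Equiv.addLeft x) _ _ fun _ => rfl).symm
      _ = ∑ h, ∑ x, f (x + h) * conj (f x) := sum_comm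
  calc ‖∑ x, f x‖ ^ 2 = ‖∑ h, ∑ x, f (x + h) * conj (f x)‖ := by
        rw [← hexpand, norm_mul, Complex.norm_conj, sq]
    _ ≤ _ := norm_sum_le _ _

noncomputable def weylBound (p d : ℕ) : ℝ := (((d : ℝ) - 1) / p) ^ ((2 : ℝ) ^ (-(d : ℝ)))

lemma weylBound_nonneg {p d : ℕ} (hd : 1 ≤ d) : 0 ≤ weylBound p d := by
  have : (1 : ℝ) ≤ d := by exact_mod_cast hd
  unfold weylBound; positivity

lemma weylBound_le_one {p d : ℕ} (hd : 1 ≤ d) (hdp : d ≤ p) : weylBound p d ≤ 1 := by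
  have : (1 : ℝ) ≤ d := by exact_mod_cast hd
  have : (d : ℝ) ≤ p := by exact_mod_cast hdp
  refine Real.rpow_le_one (by positivity) (div_le_one_of_le₀ (by linarith) (by positivity))
    (by positivity)

/-- By concavity of `t ↦ t ^ (2 ^ (-d))`, since `1/p + (d - 1)/p = d/p`. -/
lemma inv_add_mul_weylBound_le_sq {p d : ℕ} (hp : 1 ≤ p) (hd : 1 ≤ d) :
    1 / p + (1 - 1 / p) * weylBound p d ≤ weylBound p (d + 1) ^ 2 := by
  set E : ℝ := (2 : ℝ) ^ (-(d : ℝ))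
  have hpR : (1 : ℝ) ≤ p := by exact_mod_cast hp
  have hdR : (1 : ℝ) ≤ d := by exact_mod_cast hd
  have hinv : 1 / (p : ℝ) ≤ 1 := by rw [div_le_one (by linarith)]; exact hpR
  have hB : 0 ≤ ((d : ℝ) - 1) / p := by apply div_nonneg <;> linarith
  have hsq : weylBound p (d + 1) ^ 2 = ((d : ℝ) / p) ^ E := by
    have hbase : (((d + 1 : ℕ) : ℝ) - 1) / p = d / p := by push_cast; ring
    rw [weylBound, hbase, ← Real.rpow_natCast, ← Real.rpow_mul (by positivity)]
    congr 1
    push_cast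
    rw [neg_add, Real.rpow_add two_pos, Real.rpow_neg_one]
    ring
  have hconc := (Real.concaveOn_rpow (p := E) (by positivity)
    (Real.rpow_le_one_of_one_le_of_nonpos one_le_two (by linarith))).2
    (Set.mem_Ici.2 zero_le_one) (Set.mem_Ici.2 hB) (by positivity) (sub_nonneg.2 hinv)
    (add_sub_cancel _ _)
  simp only [smul_eq_mul, Real.one_rpow, mul_one] at hconc
  have hmid : 1 / (p : ℝ) + (1 - 1 / p) * ((d - 1) / p) ≤ d / p := by
    have : (1 - 1 / (p : ℝ)) * ((d - 1) / p) ≤ (d - 1) / p :=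
      mul_le_of_le_one_left hB (by linarith [show (0 : ℝ) < 1 / p by positivity])
    linarith [show (1 : ℝ) / p + (d - 1) / p = d / p by ring]
  calc 1 / p + (1 - 1 / p) * weylBound p d ≤ (1 / p + (1 - 1 / p) * (((d : ℝ) - 1) / p)) ^ E :=
        hconc
    _ ≤ ((d : ℝ) / p) ^ E := by gcongr
    _ = weylBound p (d + 1) ^ 2 := hsq.symm

lemma sum_le_of_bound_off_small_set {α : Type*} [Fintype α] {a : α → ℝ} {H : Finset α}
    {M X p : ℝ} (hM : 0 ≤ M) (hX : X ≤ 1) (hp : 0 < p) (ha : ∀ x, a x ≤ M)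
    (haH : ∀ x ∉ H, a x ≤ M * X) (hH : p * #H ≤ Fintype.card α) :
    ∑ x, a x ≤ Fintype.card α * M * (1 / p + (1 - 1 / p) * X) := by
  classical
  have hHp : (#H : ℝ) ≤ Fintype.card α / p := by rw [le_div_iff₀ hp]; linarith
  calc ∑ x, a x = ∑ x ∈ H, a x + ∑ x ∈ Hᶜ, a x := (sum_add_sum_compl H a).symm
    _ ≤ ∑ x ∈ H, M + ∑ x ∈ Hᶜ, M * X :=
        add_le_add (sum_le_sum fun x _ => ha x) (sum_le_sum fun x hx => haH x (mem_compl.1 hx))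
    _ = #H * M + (Fintype.card α - #H) * (M * X) := by
        rw [sum_const, sum_const, card_compl, nsmul_eq_mul, nsmul_eq_mul,
          Nat.cast_sub (card_le_univ H)]
    _ ≤ Fintype.card α * M * (1 / p + (1 - 1 / p) * X) := by
        have hgap : Fintype.card α * M * (1 / p + (1 - 1 / p) * X)
            - (#H * M + (Fintype.card α - #H) * (M * X))
            = (Fintype.card α / p - #H) * (M * (1 - X)) := by ring
        linarith [mul_nonneg (sub_nonneg.2 hHp) (mul_nonneg hM (sub_nonneg.2 hX))]

def PolyPhaseBound (R ι : Type*) [CommRing R] [Fintype R] [Fintype ι] [DecidableEq ι] (d : ℕ) :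
    Prop :=
  ∀ (B : Finset (ι → ℕ)) (ψ : (ι → ℕ) → AddChar R ℂ), B.Nonempty → (∀ β ∈ B, β ≠ 0) →
    (∀ β ∈ B, ψ β ≠ 1) → (∀ β ∈ B, ∑ i, β i ≤ d) →
    ‖∑ y, polyPhase B ψ y‖ ≤ Fintype.card R ^ Fintype.card ι * weylBound (ringChar R).minFac d

section Induction

variable {R : Type*} [CommRing R] [Fintype R] {ι : Type*} [Fintype ι] [DecidableEq ι]

lemma PolyPhaseBound.norm_sum_derivChar_le {d : ℕ} (ih : PolyPhaseBound R ι d)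
    {B s : Finset (ι → ℕ)} {ψ : (ι → ℕ) → AddChar R ℂ} (hdeg : ∀ β ∈ B, ∑ i, β i ≤ d + 1)
    {γ : ι → ℕ} {h : ι → R} (hγs : γ ∈ s) (hγ0 : γ ≠ 0) (hh : derivChar B ψ γ h ≠ 1) :
    ‖∑ y, polyPhase s (derivChar B ψ · h) y‖
      ≤ Fintype.card R ^ Fintype.card ι * weylBound (ringChar R).minFac d := by
  rw [norm_sum_polyPhase_filter]
  refine ih _ _ ⟨γ, mem_filter.2 ⟨hγs, hγ0, hh⟩⟩ (fun _ hγ' => (mem_filter.1 hγ').2.1)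
    (fun _ hγ' => (mem_filter.1 hγ').2.2) fun γ' hγ' => ?_
  obtain ⟨β, hβ, hlt⟩ := exists_sum_lt_of_derivChar_ne_one (mem_filter.1 hγ').2.2
  have := hdeg β hβ
  omega

lemma PolyPhaseBound.norm_sum_le_of_add_single_mem {d : ℕ} (ih : PolyPhaseBound R ι d)
    (hd : d + 1 < (ringChar R).minFac) {B : Finset (ι → ℕ)} {ψ : (ι → ℕ) → AddChar R ℂ}
    (hψ : ∀ β ∈ B, ψ β ≠ 1) (hdeg : ∀ β ∈ B, ∑ i, β i ≤ d + 1) {γ : ι → ℕ} {j : ι}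
    (hγj : γ + Pi.single j 1 ∈ B) (hγ0 : γ ≠ 0) (hγdeg : ∀ β ∈ B, ∑ i, β i ≤ ∑ i, γ i + 1) :
    ‖∑ y, polyPhase B ψ y‖
      ≤ Fintype.card R ^ Fintype.card ι * weylBound (ringChar R).minFac (d + 1) := by
  set p := (ringChar R).minFac
  set N : ℝ := Fintype.card R ^ Fintype.card ι
  have hγj_le : γ j + 1 ≤ d + 1 := by
    have := single_le_sum (fun i _ => Nat.zero_le _) (mem_univ j) |>.trans (hdeg _ hγj)
    simpa using this
  have hd1 : 1 ≤ d := by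
    have hγsum : ∑ i, γ i ≠ 0 := fun h => hγ0 (funext fun i => sum_eq_zero_iff.1 h i (mem_univ i))
    have := hdeg _ hγj
    rw [sum_add_single_one] at this
    omega
  set s := B.biUnion Iic
  have hs : ∀ β ∈ B, Iic β ⊆ s := fun β hβ => subset_biUnion_of_mem Iic hβ
  have hcount := minFac_ringChar_mul_card_derivChar_eq_one_le hγj (hψ _ hγj) hγdeg (by omega)
  have hp : (0 : ℝ) < p := by exact_mod_cast Nat.minFac_pos _
  have hcardN : (Fintype.card (ι → R) : ℝ) = N := by simp [N]
  have hsq : ‖∑ y, polyPhase B ψ y‖ ^ 2 ≤ (N * weylBound p (d + 1)) ^ 2 := calc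
    ‖∑ y, polyPhase B ψ y‖ ^ 2
        ≤ ∑ h, ‖∑ y, polyPhase B ψ (y + h) * conj (polyPhase B ψ y)‖ :=
          sq_norm_sum_le_sum_norm_sum_add_mul_conj _
    _ = ∑ h, ‖∑ y, polyPhase s (derivChar B ψ · h) y‖ := by
          simp_rw [polyPhase_add_mul_conj hs]
    _ ≤ Fintype.card (ι → R) * N * (1 / p + (1 - 1 / p) * weylBound p d) :=
          sum_le_of_bound_off_small_set (H := {h | derivChar B ψ γ h = 1}) (by positivity)
            (weylBound_le_one hd1 (by omega)) hp (fun _ => norm_sum_polyPhase_le_card _ _)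
            (fun h hh => ih.norm_sum_derivChar_le hdeg (hs _ hγj (mem_Iic.2 le_self_add)) hγ0
              (by simpa using hh))
            (by rw [Fintype.card_fun]; exact_mod_cast hcount)
    _ ≤ N * N * weylBound p (d + 1) ^ 2 := by
          rw [hcardN]
          gcongr
          exact inv_add_mul_weylBound_le_sq (Nat.minFac_pos _) hd1
    _ = (N * weylBound p (d + 1)) ^ 2 := by ring
  exact (pow_le_pow_iff_left₀ (norm_nonneg _)
    (mul_nonneg (by positivity) (weylBound_nonneg (by omega))) two_ne_zero).1 hsq

lemma PolyPhaseBound.succ {d : ℕ} (ih : PolyPhaseBound R ι d) (hd : d + 1 < (ringChar R).minFac) :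
    PolyPhaseBound R ι (d + 1) := by
  intro B ψ hB hB0 hψ hdeg
  by_cases hlin : ∀ β ∈ B, ∑ i, β i ≤ 1
  · rw [sum_polyPhase_eq_zero_of_sum_le_one hB hB0 hψ hlin, norm_zero]
    exact mul_nonneg (by positivity) (weylBound_nonneg (by omega))
  push Not at hlin
  obtain ⟨γ, j, hγj, hγ0, hγdeg⟩ := exists_add_single_mem hlin
  exact ih.norm_sum_le_of_add_single_mem hd hψ hdeg hγj hγ0 hγdeg

theorem polyPhaseBound {d : ℕ} (hd : d < (ringChar R).minFac) : PolyPhaseBound R ι d := by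
  induction d with
  | zero =>
    intro B ψ ⟨β, hβ⟩ hB0 _ hdeg
    exact absurd (funext fun i => sum_eq_zero_iff.1 (Nat.le_zero.1 (hdeg β hβ)) i (mem_univ i))
      (hB0 β hβ)
  | succ d ih => exact (ih (by omega)).succ hd

end Induction

theorem distinct_powers_character_estimate_general
    (R : Type*) [CommRing R] [Fintype R]
    (n K : ℕ) (hK : 1 ≤ K)
    (α : Fin K → Fin n → ℕ) (hαinj : Function.Injective α) (hα : ∀ k, α k ≠ 0)
    (χ : Fin K → R → ℂ) (hχ : ∀ k, IsAddCharFn (χ k))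
    (hnontriv : ∀ k, ¬ ∀ x, χ k x = 1)
    (d : ℕ) (hdlt : d < Nat.minFac (ringChar R))
    (hdge : ∀ k, ∑ i, α k i ≤ d) :
    ‖(1 / (Fintype.card R : ℂ) ^ n) *
        ∑ y : Fin n → R, ∏ k : Fin K, χ k (∏ i : Fin n, y i ^ α k i)‖
      ≤ (((d : ℝ) - 1) / (Nat.minFac (ringChar R) : ℝ)) ^ ((2 : ℝ) ^ (-(d : ℝ))) := by
  set ψ : (Fin n → ℕ) → AddChar R ℂ := Function.extend α (fun k => (hχ k).toAddChar) 1
  have hψ : ∀ k, ψ (α k) = (hχ k).toAddChar := hαinj.extend_apply _ _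
  have hsum : ∑ y : Fin n → R, ∏ k, χ k (∏ i, y i ^ α k i)
      = ∑ y, polyPhase (univ.image α) ψ y := by
    simp [polyPhase, prod_image hαinj.injOn, hψ, evalMonomial]
  have hbound := polyPhaseBound (ι := Fin n) hdlt (univ.image α) ψ
    (image_nonempty.2 ⟨⟨0, hK⟩, mem_univ _⟩) (by simpa using hα)
    (by simpa [hψ, AddChar.ne_one_iff] using hnontriv) (by simpa using hdge)
  rw [hsum, norm_mul, norm_div, norm_one, norm_pow, Complex.norm_natCast, one_div,
    inv_mul_le_iff₀ (by positivity)]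
  simpa [weylBound] using hbound

/-- **Proposition (character sums along distinct monomials).** Let `R` be a finite commutative
ring of characteristic `N` and `n ≥ 1`. Let `α₁, …, α_K` be distinct nonzero `n`-tuples of
nonnegative integers, `χ₁, …, χ_K` nontrivial additive characters of `R`, and `d` a positive
integer with `d < lpf(N)` and `d ≥ max_k ∑ᵢ α^{(k)}ᵢ`. Then
`| (1/|R|^n) ∑_{y ∈ Rⁿ} ∏ₖ χₖ(y^{αₖ}) | ≤ ((d−1)/lpf(N))^{2^{−d}}`. -/
theorem distinct_powers_character_estimate
    (R : Type*) [CommRing R] [Fintype R] [Nontrivial R]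
    (n K : ℕ) (hn : 1 ≤ n) (hK : 1 ≤ K)
    (α : Fin K → Fin n → ℕ) (hαinj : Function.Injective α) (hα : ∀ k, α k ≠ 0)
    (χ : Fin K → R → ℂ) (hχ : ∀ k, IsAddCharFn (χ k))
    (hnontriv : ∀ k, ¬ ∀ x, χ k x = 1)
    (d : ℕ) (hd0 : 0 < d) (hdlt : d < Nat.minFac (ringChar R))
    (hdge : ∀ k, ∑ i, α k i ≤ d) :
    ‖(1 / (Fintype.card R : ℂ) ^ n) *
        ∑ y : Fin n → R, ∏ k : Fin K, χ k (∏ i : Fin n, y i ^ α k i)‖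
      ≤ (((d : ℝ) - 1) / (Nat.minFac (ringChar R) : ℝ)) ^ ((2 : ℝ) ^ (-(d : ℝ))) :=
  distinct_powers_character_estimate_general R n K hK α hαinj hα χ hχ hnontriv d hdlt hdge
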